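/- Let G = (V,E) be a graph and (A, V\A) a cut such that A is partitioned into A_1,…,A_k where each A_i is a module of G \ (A \ A_i). Let B_i = N_G(A_i) \ A. Then for every u ∈ A and v ∉ A, d_G(u,v) = min over 1 ≤ i ≤ k of (d_G(u,A_i) + 1 + d_G(B_i,v)), where distances to empty sets are +∞. -/

import Mathlib

open scoped Classical

/-- `setEDist G u S` is the distance in `G` from the vertex `u` to the set `S`,
namely `min_{s ∈ S} d_G(u,s)`, with value `⊤` (i.e. `+∞`) when `S = ∅`. -/
noncomputable def setEDist {V : Type*} (G : SimpleGraph V) (u : V) (S : Set V) : ℕ∞ :=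
  ⨅ s ∈ S, G.edist u s

/-!
A shortest `u`–`v` path leaves `A` along some edge `ab` with `a ∈ A_i` and `b ∉ A`, so `b ∈ B_i`;
this gives `d(u,v) ≥ d(u,A_i) + 1 + d(B_i,v)` for that `i`. Conversely, the module property makes
every vertex of `A_i` adjacent to every vertex of `B_i`, so any `a ∈ A_i` and `b ∈ B_i` yield a
`u`–`v` path of length `d(u,a) + 1 + d(b,v)`.
-/

namespace SimpleGraph

variable {V : Type*} {G : SimpleGraph V}

lemma setEDist_le_edist (u : V) {S : Set V} {s : V} (hs : s ∈ S) :
    setEDist G u S ≤ G.edist u s :=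
  iInf₂_le s hs

lemma setEDist_add_one_add_setEDist (u v : V) (S T : Set V) :
    setEDist G u S + 1 + setEDist G v T = ⨅ s ∈ S, ⨅ t ∈ T, G.edist u s + 1 + G.edist v t := by
  simp only [setEDist, ENat.iInf_add, ENat.add_iInf]
  exact iInf₂_comm _

lemma edist_le_edist_add_one_add_edist {u v a b : V} (hab : G.Adj a b) :
    G.edist u v ≤ G.edist u a + 1 + G.edist v b :=
  calc G.edist u v ≤ G.edist u a + G.edist a v := SimpleGraph.edist_triangle
    _ ≤ G.edist u a + (G.edist a b + G.edist b v) := by gcongr; exact SimpleGraph.edist_triangle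
    _ = G.edist u a + 1 + G.edist v b := by
      rw [edist_eq_one_iff_adj.mpr hab, edist_comm (u := b), add_assoc]

lemma edist_le_setEDist_add_one_add_setEDist {S T : Set V} (hST : ∀ s ∈ S, ∀ t ∈ T, G.Adj s t)
    (u v : V) : G.edist u v ≤ setEDist G u S + 1 + setEDist G v T := by
  rw [setEDist_add_one_add_setEDist]
  exact le_iInf₂ fun s hs ↦ le_iInf₂ fun t ht ↦ edist_le_edist_add_one_add_edist (hST s hs t ht)

lemma Walk.exists_adj_edist_add_one_add_edist_le {A : Set V} {u v : V} (p : G.Walk u v)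
    (hu : u ∈ A) (hv : v ∉ A) :
    ∃ a ∈ A, ∃ b ∉ A, G.Adj a b ∧ G.edist u a + 1 + G.edist v b ≤ p.length := by
  induction p with
  | nil => exact absurd hu hv
  | @cons x y z hxy p ih =>
    by_cases hy : y ∈ A
    · obtain ⟨a, ha, b, hb, hab, hle⟩ := ih hy hv
      refine ⟨a, ha, b, hb, hab, ?_⟩
      calc G.edist x a + 1 + G.edist z b
          ≤ G.edist x y + G.edist y a + 1 + G.edist z b := by
            gcongr; exact SimpleGraph.edist_triangle
        _ = 1 + (G.edist y a + 1 + G.edist z b) := by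
            rw [edist_eq_one_iff_adj.mpr hxy]; ring
        _ ≤ (p.cons hxy).length := by
            rw [Walk.length_cons, Nat.cast_succ, add_comm (p.length : ℕ∞)]; gcongr
    · refine ⟨x, hu, y, hy, hxy, ?_⟩
      rw [edist_self, zero_add, add_comm, Walk.length_cons, Nat.cast_succ, edist_comm]
      gcongr
      exact edist_le p

end SimpleGraph

open SimpleGraph in
theorem dist_formula_cross {V : Type*} (G : SimpleGraph V)
    (A : Set V) (k : ℕ) (Apart : Fin k → Set V)
    (hcover : (⋃ i, Apart i) = A)
    (hmod : ∀ i, ∀ u ∈ Apart i, ∀ v ∈ Apart i, ∀ x ∉ A, (G.Adj u x ↔ G.Adj v x))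
    (B : Fin k → Set V) (hB : ∀ i, B i = {x | x ∉ A ∧ ∃ a ∈ Apart i, G.Adj a x})
    (u v : V) (hu : u ∈ A) (hv : v ∉ A) :
    G.edist u v = ⨅ i : Fin k, (setEDist G u (Apart i) + 1 + setEDist G v (B i)) := by
  have hjoin : ∀ i, ∀ a ∈ Apart i, ∀ b ∈ B i, G.Adj a b := by
    intro i a ha b hb
    rw [hB i] at hb
    obtain ⟨hbA, a', ha', ha'b⟩ := hb
    exact (hmod i a ha a' ha' b hbA).mpr ha'b
  refine le_antisymm (le_iInf fun i ↦ edist_le_setEDist_add_one_add_setEDist (hjoin i) u v) ?_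
  obtain h | h := eq_or_ne (G.edist u v) ⊤
  · exact h ▸ le_top
  obtain ⟨p, hp⟩ := exists_walk_of_edist_ne_top h
  obtain ⟨a, ha, b, hb, hab, hle⟩ := p.exists_adj_edist_add_one_add_edist_le hu hv
  obtain ⟨i, hai⟩ := Set.mem_iUnion.mp (hcover ▸ ha)
  have hbi : b ∈ B i := by rw [hB i]; exact ⟨hb, a, hai, hab⟩
  calc ⨅ j, setEDist G u (Apart j) + 1 + setEDist G v (B j)
      ≤ setEDist G u (Apart i) + 1 + setEDist G v (B i) := iInf_le _ i
    _ ≤ G.edist u a + 1 + G.edist v b := by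
      gcongr
      exacts [setEDist_le_edist u hai, setEDist_le_edist v hbi]
    _ ≤ G.edist u v := hp ▸ hle
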